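/- arXiv:2310.19933 — 3 statements merged into one kernel-verified Lean document; each statement's English description precedes it below -/
import Mathlib

section
/- Let Y > 0, let u : [0,Y] → ℝ be continuous, and for each ε > 0 let u_ε : [0,Y] → ℝ be continuous, with u_ε → u uniformly on [0,Y] as ε → 0⁺. Suppose there exist constants 0 < m ≤ M such that m ≤ ∫₀^Y exp(u_ε(y)/ε) dy ≤ M for all sufficiently small ε > 0. Then max_{y∈[0,Y]} u(y) = 0. -/
/-- if the Laplace-type integrals `∫₀^Y exp(u_ε(y)/ε) dy` stay
bounded between `m > 0` and `M` for all sufficiently small `ε > 0`, and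
`u_ε → u` uniformly on `[0,Y]` as `ε → 0⁺`, then `max_{[0,Y]} u = 0`. -/
theorem laplace_integral_bounded_max_eq_zero
    (Y : ℝ) (hY : 0 < Y)
    (u : ℝ → ℝ) (hu : ContinuousOn u (Set.Icc 0 Y))
    (uE : ℝ → ℝ → ℝ)
    (hcont : ∀ ε : ℝ, 0 < ε → ContinuousOn (uE ε) (Set.Icc 0 Y))
    (hunif : TendstoUniformlyOn uE u (nhdsWithin 0 (Set.Ioi 0)) (Set.Icc 0 Y))
    (m M : ℝ) (hm : 0 < m) (hmM : m ≤ M)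
    (hbound : ∀ᶠ ε in nhdsWithin (0:ℝ) (Set.Ioi 0),
        m ≤ (∫ y in (0:ℝ)..Y, Real.exp (uE ε y / ε)) ∧
        (∫ y in (0:ℝ)..Y, Real.exp (uE ε y / ε)) ≤ M) :
    sSup (u '' Set.Icc 0 Y) = 0 := by
  obtain ⟨y₀, hy₀, hmax⟩ := isCompact_Icc.exists_isMaxOn
    ⟨0, Set.left_mem_Icc.2 hY.le⟩ hu
  have hS : sSup (u '' Set.Icc 0 Y) = u y₀ := by
    apply IsGreatest.csSup_eq
    exact ⟨⟨y₀, hy₀, rfl⟩, by rintro _ ⟨y, hy, rfl⟩; exact hmax hy⟩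
  rw [hS]
  set S := u y₀ with hSdef
  have hunif' := Metric.tendstoUniformlyOn_iff.1 hunif
  -- integrability of the integrand, for ε > 0
  have hInt : ∀ ε : ℝ, 0 < ε →
      IntervalIntegrable (fun y => Real.exp (uE ε y / ε)) MeasureTheory.volume 0 Y := by
    intro ε hε
    apply ContinuousOn.intervalIntegrable
    rw [Set.uIcc_of_le hY.le]
    exact Real.continuous_exp.comp_continuousOn ((hcont ε hε).div_const ε)
  rcases lt_trichotomy S 0 with hneg | h0 | hpos
  · -- S < 0 : integral tends to 0, contradicting m ≤ integral
    exfalso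
    have hclose := hunif' (-S/2) (by linarith)
    have htend : Filter.Tendsto (fun ε : ℝ => Real.exp (S/2 * ε⁻¹))
        (nhdsWithin 0 (Set.Ioi 0)) (nhds 0) := by
      refine Real.tendsto_exp_atBot.comp ?_
      exact (Filter.tendsto_const_mul_atBot_of_neg (by linarith)).2 tendsto_inv_nhdsGT_zero
    have hsmall : ∀ᶠ ε in nhdsWithin (0:ℝ) (Set.Ioi 0),
        Y * Real.exp (S/2 * ε⁻¹) < m := by
      filter_upwards [htend.eventually_lt_const (show (0:ℝ) < m / Y by positivity)] with ε h1
      calc Y * Real.exp (S/2 * ε⁻¹) < Y * (m / Y) := by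
            exact mul_lt_mul_of_pos_left h1 hY
        _ = m := by field_simp
    have := (hbound.and (hclose.and (hsmall.and (eventually_mem_nhdsWithin)))).exists
    obtain ⟨ε, ⟨hmle, _⟩, hcl, hsm, hε⟩ := this
    have hε : 0 < ε := hε
    have hle : (∫ y in (0:ℝ)..Y, Real.exp (uE ε y / ε))
        ≤ ∫ y in (0:ℝ)..Y, Real.exp (S/2 * ε⁻¹) := by
      apply intervalIntegral.integral_mono_on hY.le (hInt ε hε)
        (intervalIntegrable_const)
      intro y hy
      apply Real.exp_le_exp.2
      have h1 := hcl y hy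
      rw [Real.dist_eq, abs_lt] at h1
      have h2 : u y ≤ S := hmax hy
      have h3 : uE ε y ≤ S/2 := by linarith [h1.1, h1.2]
      calc uE ε y / ε ≤ (S/2) / ε := by
            exact div_le_div_of_nonneg_right h3 hε.le |>.trans_eq rfl
        _ = S/2 * ε⁻¹ := div_eq_mul_inv _ _
    rw [intervalIntegral.integral_const, smul_eq_mul, sub_zero] at hle
    linarith
  · exact h0
  · -- S > 0 : integral tends to ∞, contradicting integral ≤ M
    exfalso
    -- find a subinterval around y₀ where u > 3S/4
    have hcw : ContinuousWithinAt u (Set.Icc 0 Y) y₀ := hu y₀ hy₀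
    rw [Metric.continuousWithinAt_iff] at hcw
    obtain ⟨δ, hδ, hδu⟩ := hcw (S/4) (by linarith)
    set c := max 0 (y₀ - δ/2) with hc
    set d := min Y (y₀ + δ/2) with hd
    have hy0l : 0 ≤ y₀ := hy₀.1
    have hy0r : y₀ ≤ Y := hy₀.2
    have hcd : c < d := by
      rw [hc, hd]
      apply max_lt <;> apply lt_min <;> linarith
    have hc0 : 0 ≤ c := le_max_left _ _
    have hdY : d ≤ Y := min_le_left _ _
    have hsub : Set.Icc c d ⊆ Set.Icc 0 Y := Set.Icc_subset_Icc hc0 hdY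
    have hular : ∀ y ∈ Set.Icc c d, 3*S/4 < u y := by
      intro y hy
      have hy' : y ∈ Set.Icc 0 Y := hsub hy
      have hdist : dist y y₀ < δ := by
        rw [Real.dist_eq, abs_lt]
        constructor
        · have := hy.1; rw [hc] at this
          have := le_trans (le_max_right _ _) this
          linarith
        · have := hy.2; rw [hd] at this
          have := le_trans this (min_le_right _ _)
          linarith
      have := hδu hy' hdist
      rw [Real.dist_eq, abs_lt] at this
      have := this.1
      simp only [← hSdef] at this
      linarith
    have hclose := hunif' (S/4) (by linarith)
    have htend : Filter.Tendsto (fun ε : ℝ => (d - c) * Real.exp (S/2 * ε⁻¹))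
        (nhdsWithin 0 (Set.Ioi 0)) Filter.atTop := by
      apply Filter.Tendsto.const_mul_atTop (by linarith : (0:ℝ) < d - c)
      exact Real.tendsto_exp_atTop.comp
        ((Filter.Tendsto.const_mul_atTop (by linarith : (0:ℝ) < S/2)) tendsto_inv_nhdsGT_zero)
    have hbig := htend.eventually_gt_atTop M
    obtain ⟨ε, ⟨_, hMle⟩, hcl, hbg, hε⟩ :=
      (hbound.and (hclose.and (hbig.and (eventually_mem_nhdsWithin)))).exists
    have hε : 0 < ε := hε
    -- lower bound: ∫₀^Y ≥ ∫_c^d ≥ (d-c) exp(S/(2ε))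
    have hstep1 : (∫ y in c..d, Real.exp (S/2 * ε⁻¹))
        ≤ ∫ y in c..d, Real.exp (uE ε y / ε) := by
      apply intervalIntegral.integral_mono_on hcd.le intervalIntegrable_const
      · apply ContinuousOn.intervalIntegrable
        rw [Set.uIcc_of_le hcd.le]
        exact (Real.continuous_exp.comp_continuousOn
          ((hcont ε hε).div_const ε)).mono hsub
      · intro y hy
        apply Real.exp_le_exp.2
        have h1 := hcl y (hsub hy)
        rw [Real.dist_eq, abs_lt] at h1
        have h2 := hular y hy
        have h3 : S/2 ≤ uE ε y := by linarith [h1.1, h1.2]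
        calc S/2 * ε⁻¹ = (S/2) / ε := (div_eq_mul_inv _ _).symm
          _ ≤ uE ε y / ε := div_le_div_of_nonneg_right h3 hε.le |>.trans_eq rfl
    have hstep2 : (∫ y in c..d, Real.exp (uE ε y / ε))
        ≤ ∫ y in (0:ℝ)..Y, Real.exp (uE ε y / ε) := by
      apply intervalIntegral.integral_mono_interval hc0 hcd.le hdY
      · filter_upwards with y using (Real.exp_pos _).le
      · exact hInt ε hε
    rw [intervalIntegral.integral_const, smul_eq_mul] at hstep1
    linarith
end

section
/- Let Y > 0, let u : [0,Y] → ℝ be continuous and attain its maximum at a unique point ȳ ∈ [0,Y], i.e. u(y) < u(ȳ) for all y ≠ ȳ, and let φ : [0,Y] → ℝ be continuous. Then the ratio ( ∫₀^Y φ(y) exp(u(y)/ε) dy ) / ( ∫₀^Y exp(u(y)/ε) dy ) tends to φ(ȳ) as ε → 0⁺. -/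
open MeasureTheory Set Filter Real

/-- Laplace-type concentration. If `u` attains its maximum on
`[0,Y]` at a unique point `ybar`, then the normalised integrals of `φ` against
`exp(u/ε)` converge to `φ(ybar)` as `ε → 0⁺`. -/
theorem laplace_ratio_tendsto_value_at_max
    (Y : ℝ) (hY : 0 < Y)
    (u φ : ℝ → ℝ)
    (hu : ContinuousOn u (Set.Icc 0 Y))
    (hφ : ContinuousOn φ (Set.Icc 0 Y))
    (ybar : ℝ) (hybar : ybar ∈ Set.Icc 0 Y)
    (hmax : ∀ y ∈ Set.Icc 0 Y, y ≠ ybar → u y < u ybar) :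
    Filter.Tendsto
      (fun ε : ℝ => (∫ y in (0:ℝ)..Y, φ y * Real.exp (u y / ε)) /
                    (∫ y in (0:ℝ)..Y, Real.exp (u y / ε)))
      (nhdsWithin 0 (Set.Ioi 0)) (nhds (φ ybar)) := by
  have hIcc : Set.uIcc (0:ℝ) Y = Set.Icc 0 Y := Set.uIcc_of_le hY.le
  have hInt : ∀ ε : ℝ, ∀ ψ : ℝ → ℝ, ContinuousOn ψ (Set.Icc 0 Y) →
      IntervalIntegrable (fun y => ψ y * Real.exp (u y / ε)) volume 0 Y := by
    intro ε ψ hψ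
    apply ContinuousOn.intervalIntegrable
    rw [hIcc]
    exact hψ.mul (Real.continuous_exp.comp_continuousOn (hu.div_const ε))
  rw [Metric.tendsto_nhds]
  intro η hη
  -- bound M on |φ - φ ybar|
  obtain ⟨M, hM⟩ := isCompact_Icc.exists_bound_of_continuousOn
    (f := fun y => φ y - φ ybar) (hφ.sub continuousOn_const)
  have hM0 : 0 ≤ M := le_trans (norm_nonneg _) (hM ybar hybar)
  -- δ from continuity of φ at ybar
  obtain ⟨δ, hδ0, hδ⟩ := Metric.continuousWithinAt_iff.mp (hφ ybar hybar) (η/2) (half_pos hη)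
  -- gap c off the δ-ball
  obtain ⟨c, hc0, hc⟩ : ∃ c > 0, ∀ y ∈ Set.Icc 0 Y, δ ≤ |y - ybar| → u y ≤ u ybar - c := by
    set K := Set.Icc 0 Y ∩ {y | δ ≤ |y - ybar|} with hK
    have hKc : IsCompact K := isCompact_Icc.inter_right
      (isClosed_le continuous_const ((continuous_id.sub continuous_const).abs))
    rcases K.eq_empty_or_nonempty with hKe | hKne
    · exact ⟨1, one_pos, fun y hy hy' =>
        (Set.notMem_empty y (hKe ▸ (⟨hy, hy'⟩ : y ∈ K))).elim⟩
    · obtain ⟨y₀, hy₀K, hy₀⟩ := hKc.exists_isMaxOn hKne (hu.mono Set.inter_subset_left)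
      have hy₀ne : y₀ ≠ ybar := by
        intro h
        have := hy₀K.2
        rw [h] at this
        simp at this
        linarith
      refine ⟨u ybar - u y₀, by linarith [hmax y₀ hy₀K.1 hy₀ne], fun y hy hy' => ?_⟩
      have := hy₀ ⟨hy, hy'⟩
      simpa using this
  -- interval [a,b] near ybar where u ≥ u ybar - c/2
  obtain ⟨δ', hδ'0, hδ'⟩ := Metric.continuousWithinAt_iff.mp (hu ybar hybar) (c/2) (half_pos hc0)
  set a := max 0 (ybar - δ'/2) with ha_def
  set b := min Y (ybar + δ'/2) with hb_def
  have ha0 : (0:ℝ) ≤ a := le_max_left _ _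
  have hbY : b ≤ Y := min_le_left _ _
  have hab : a < b := by
    simp only [ha_def, hb_def, lt_min_iff, max_lt_iff]
    refine ⟨⟨hY, by linarith [hybar.2]⟩, ⟨by linarith [hybar.1], by linarith⟩⟩
  have hmem : ∀ y ∈ Set.Icc a b, y ∈ Set.Icc 0 Y ∧ |y - ybar| < δ' := by
    intro y hy
    have h1 : ybar - δ'/2 ≤ y := le_trans (le_max_right _ _) hy.1
    have h2 : y ≤ ybar + δ'/2 := le_trans hy.2 (min_le_right _ _)
    refine ⟨⟨le_trans ha0 hy.1, le_trans hy.2 hbY⟩, ?_⟩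
    rw [abs_lt]; constructor <;> linarith
  have hulow : ∀ y ∈ Set.Icc a b, u ybar - c/2 ≤ u y := by
    intro y hy
    obtain ⟨hy1, hy2⟩ := hmem y hy
    have := hδ' hy1 (by rwa [Real.dist_eq])
    rw [Real.dist_eq, abs_lt] at this
    linarith [this.1]
  set ℓ := b - a with hℓ_def
  have hℓ0 : 0 < ℓ := sub_pos.mpr hab
  -- the decaying term tends to 0
  have hdecay : Filter.Tendsto (fun ε : ℝ => (Y * M / ℓ) * Real.exp (-(c/(2*ε))))
      (nhdsWithin 0 (Set.Ioi 0)) (nhds 0) := by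
    have h1 : Filter.Tendsto (fun ε : ℝ => -(c/(2*ε))) (nhdsWithin 0 (Set.Ioi 0)) atBot := by
      have h2 : Filter.Tendsto (fun ε : ℝ => c/2 * ε⁻¹) (nhdsWithin 0 (Set.Ioi 0)) atTop :=
        tendsto_inv_nhdsGT_zero.const_mul_atTop (half_pos hc0)
      have h3 := tendsto_neg_atTop_atBot.comp h2
      refine h3.congr fun ε => ?_
      simp only [Function.comp]
      ring
    have := (Real.tendsto_exp_atBot.comp h1).const_mul (Y * M / ℓ)
    simpa using this
  have hev : ∀ᶠ ε in nhdsWithin (0:ℝ) (Set.Ioi 0),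
      (Y * M / ℓ) * Real.exp (-(c/(2*ε))) < η/2 :=
    hdecay.eventually_lt_const (half_pos hη)
  filter_upwards [self_mem_nhdsWithin, hev] with ε hε hgε
  have hε0 : (0:ℝ) < ε := hε
  -- notation
  set D := ∫ y in (0:ℝ)..Y, Real.exp (u y / ε) with hD_def
  set N := ∫ y in (0:ℝ)..Y, φ y * Real.exp (u y / ε) with hN_def
  have hIntD : IntervalIntegrable (fun y => Real.exp (u y / ε)) volume 0 Y := by
    simpa using hInt ε (fun _ => 1) continuousOn_const
  have hIntN := hInt ε φ hφ
  -- lower bound for D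
  have hDlow : ℓ * Real.exp ((u ybar - c/2)/ε) ≤ D := by
    have hsub : ∫ y in a..b, Real.exp (u y / ε) ≤ D := by
      apply intervalIntegral.integral_mono_interval ha0 hab.le hbY
      · exact Filter.Eventually.of_forall fun y => (Real.exp_pos _).le
      · exact hIntD
    have hconst : ℓ * Real.exp ((u ybar - c/2)/ε) ≤ ∫ y in a..b, Real.exp (u y / ε) := by
      have : ∫ _y in a..b, Real.exp ((u ybar - c/2)/ε) = ℓ * Real.exp ((u ybar - c/2)/ε) := by
        rw [intervalIntegral.integral_const]; simp [hℓ_def, smul_eq_mul]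
      rw [← this]
      apply intervalIntegral.integral_mono_on hab.le intervalIntegrable_const
      · exact hIntD.mono_set (Set.uIcc_subset_uIcc (by rw [hIcc]; exact ⟨ha0, le_trans hab.le hbY⟩)
          (by rw [hIcc]; exact ⟨le_trans ha0 hab.le, hbY⟩))
      · intro y hy
        gcongr <;> first | exact hε0.le | linarith [hulow y hy]
    linarith
  have hD0 : 0 < D := lt_of_lt_of_le (by positivity) hDlow
  -- N - φ ybar * D
  have hsplit : N - φ ybar * D = ∫ y in (0:ℝ)..Y, (φ y - φ ybar) * Real.exp (u y / ε) := by
    have h1 : (∫ y in (0:ℝ)..Y, (φ y - φ ybar) * Real.exp (u y / ε))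
        = (∫ y in (0:ℝ)..Y, φ y * Real.exp (u y / ε))
          - ∫ y in (0:ℝ)..Y, φ ybar * Real.exp (u y / ε) := by
      rw [← intervalIntegral.integral_sub hIntN (hInt ε (fun _ => φ ybar) continuousOn_const)]
      congr 1; ext y; ring
    rw [h1, intervalIntegral.integral_const_mul]
  -- bound on the difference integral
  have hbound : |N - φ ybar * D| ≤ (η/2) * D + Y * (M * Real.exp ((u ybar - c)/ε)) := by
    rw [hsplit]
    calc |∫ y in (0:ℝ)..Y, (φ y - φ ybar) * Real.exp (u y / ε)|
        ≤ ∫ y in (0:ℝ)..Y, |(φ y - φ ybar) * Real.exp (u y / ε)| :=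
          intervalIntegral.abs_integral_le_integral_abs hY.le
      _ ≤ ∫ y in (0:ℝ)..Y, ((η/2) * Real.exp (u y / ε) + M * Real.exp ((u ybar - c)/ε)) := by
          apply intervalIntegral.integral_mono_on hY.le
          · exact (hInt ε (fun y => φ y - φ ybar) (hφ.sub continuousOn_const)).abs
          · exact ((hInt ε (fun _ => η/2) continuousOn_const)).add intervalIntegrable_const
          · intro y hy
            rw [abs_mul, Real.abs_exp]
            by_cases hnear : |y - ybar| < δ
            · have h1 : |φ y - φ ybar| ≤ η/2 := by
                have := hδ hy (by rwa [Real.dist_eq])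
                rw [Real.dist_eq] at this
                linarith
              have h2 : 0 ≤ M * Real.exp ((u ybar - c)/ε) := by positivity
              nlinarith [Real.exp_pos (u y / ε)]
            · push_neg at hnear
              have h1 : |φ y - φ ybar| ≤ M := by
                have := hM y hy; rwa [Real.norm_eq_abs] at this
              have h2 : Real.exp (u y / ε) ≤ Real.exp ((u ybar - c)/ε) := by
                gcongr <;> first | exact hε0.le | exact hc y hy hnear
              have h3 : 0 ≤ (η/2) * Real.exp (u y / ε) := by positivity
              nlinarith [abs_nonneg (φ y - φ ybar), Real.exp_pos (u y / ε)]
      _ = (η/2) * D + Y * (M * Real.exp ((u ybar - c)/ε)) := by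
          rw [intervalIntegral.integral_add (hInt ε (fun _ => η/2) continuousOn_const)
            intervalIntegrable_const, intervalIntegral.integral_const_mul,
            intervalIntegral.integral_const]
          simp [smul_eq_mul, hD_def]
  -- put it together
  rw [Real.dist_eq]
  have hkey : |N / D - φ ybar| ≤ η/2 + (Y * M / ℓ) * Real.exp (-(c/(2*ε))) := by
    have h1 : N / D - φ ybar = (N - φ ybar * D) / D := by field_simp
    rw [h1, abs_div, abs_of_pos hD0]
    rw [div_le_iff₀ hD0]
    have h2 : Y * (M * Real.exp ((u ybar - c)/ε))
        ≤ (Y * M / ℓ) * Real.exp (-(c/(2*ε))) * D := by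
      have h3 : Real.exp ((u ybar - c)/ε) = Real.exp (-(c/(2*ε))) * Real.exp ((u ybar - c/2)/ε) := by
        rw [← Real.exp_add]
        congr 1
        field_simp
        ring
      calc Y * (M * Real.exp ((u ybar - c)/ε))
          = (Y * M / ℓ) * Real.exp (-(c/(2*ε))) * (ℓ * Real.exp ((u ybar - c/2)/ε)) := by
            rw [h3]; field_simp
        _ ≤ (Y * M / ℓ) * Real.exp (-(c/(2*ε))) * D := by
            apply mul_le_mul_of_nonneg_left hDlow
            positivity
    calc |N - φ ybar * D| ≤ (η/2) * D + Y * (M * Real.exp ((u ybar - c)/ε)) := hbound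
      _ ≤ (η/2) * D + (Y * M / ℓ) * Real.exp (-(c/(2*ε))) * D := by linarith
      _ = (η/2 + (Y * M / ℓ) * Real.exp (-(c/(2*ε)))) * D := by ring
  calc |N / D - φ ybar| ≤ η/2 + (Y * M / ℓ) * Real.exp (-(c/(2*ε))) := hkey
    _ < η/2 + η/2 := by linarith
    _ = η := by ring
end

section
/- Let Y > 0, α > 0, ρ_max > 0. Let µ : ℝ → ℝ and r : ℝ → ℝ be continuously differentiable, E : ℝ² → ℝ be such that ∂_x E exists, ρ : ℝ² → ℝ, let u : ℝ³ → ℝ be twice continuously differentiable, and let ȳ : ℝ² → (0,Y) be differentiable. Assume: (i) for all (t,x,y) ∈ ℝ × ℝ × (0,Y), ∂_t u + µ(y) ∂_x E(t,x) ∂_x u = α( r(y) − ρ(t,x)/ρ_max ) + (∂_x u)² + (∂_y u)²; (ii) for all (t,x), ∂_y u(t,x,ȳ(t,x)) = 0 and ∂_x u(t,x,ȳ(t,x)) = 0; and (iii) ∂²_yy u(t,x,ȳ(t,x)) < 0 for all (t,x). Then ȳ satisfies the transport equation ∂_t ȳ(t,x) + µ(ȳ(t,x)) ∂_x E(t,x)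 ∂_x ȳ(t,x) = α r'(ȳ(t,x)) / ( − ∂²_yy u(t,x,ȳ(t,x)) ) for all (t,x). -/
/-!
Along the fittest trait the first-order condition `∂_y u(t, x, ȳ(t, x)) = 0` holds identically,
so differentiating it in `t` and in `x` gives `∂²_ty u + ∂²_yy u ∂_t ȳ = 0` and
`∂²_xy u + ∂²_yy u ∂_x ȳ = 0`. Differentiating the Hamilton–Jacobi equation in `y` at `ȳ`,
where both `∂_x u` and `∂_y u` vanish, leaves `∂²_ty u + µ(ȳ) ∂_x E ∂²_xy u = α r'(ȳ)`.
Since second derivatives commute, eliminating the mixed derivatives and dividing by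
`∂²_yy u ≠ 0` gives the transport equation.
-/

open Filter Function Topology

section SecondDerivative

variable {E : Type*} [NormedAddCommGroup E] [NormedSpace ℝ E] {f : E → ℝ}
  {γ : ℝ → E} {w : E} {s : ℝ}

theorem HasDerivAt.fderiv_apply (v : E) (hf : DifferentiableAt ℝ (fderiv ℝ f) (γ s))
    (hγ : HasDerivAt γ w s) :
    HasDerivAt (fun s' => fderiv ℝ f (γ s') v) (fderiv ℝ (fderiv ℝ f) (γ s) w v) s :=
  ((ContinuousLinearMap.apply ℝ ℝ v).hasFDerivAt.comp _ hf.hasFDerivAt).comp_hasDerivAt s hγ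

theorem fderiv_fderiv_apply_eq_zero_of_eventually {v : E}
    (hf : DifferentiableAt ℝ (fderiv ℝ f) (γ s)) (hγ : HasDerivAt γ w s)
    (h : ∀ᶠ s' in 𝓝 s, fderiv ℝ f (γ s') v = 0) :
    fderiv ℝ (fderiv ℝ f) (γ s) w v = 0 :=
  (hγ.fderiv_apply v hf).unique ((hasDerivAt_const s 0).congr_of_eventuallyEq h)

end SecondDerivative

section Coordinates

variable {g : ℝ → ℝ} {g' : ℝ}

theorem hasDerivAt_graph_fst {a : ℝ} (b : ℝ) (hg : HasDerivAt g g' a) :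
    HasDerivAt (fun s => (s, b, g s)) ((1, 0, g') : ℝ × ℝ × ℝ) a :=
  (hasDerivAt_id a).prodMk ((hasDerivAt_const a b).prodMk hg)

theorem hasDerivAt_graph_snd (a : ℝ) {b : ℝ} (hg : HasDerivAt g g' b) :
    HasDerivAt (fun s => (a, s, g s)) ((0, 1, g') : ℝ × ℝ × ℝ) b :=
  (hasDerivAt_const b a).prodMk ((hasDerivAt_id b).prodMk hg)

theorem hasDerivAt_line_thd (a b c : ℝ) :
    HasDerivAt (fun s => (a, b, s)) ((0, 0, 1) : ℝ × ℝ × ℝ) c :=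
  (hasDerivAt_const c a).prodMk ((hasDerivAt_const c b).prodMk (hasDerivAt_id c))

end Coordinates

def uncurry₃ {α β γ δ : Type*} (u : α → β → γ → δ) : α × β × γ → δ := fun p => u p.1 p.2.1 p.2.2

section Trivariate

variable {u : ℝ → ℝ → ℝ → ℝ}

theorem hasDerivAt_uncurry₃_fst (hu : Differentiable ℝ (uncurry₃ u)) (a b c : ℝ) :
    HasDerivAt (fun s => u s b c) (fderiv ℝ (uncurry₃ u) (a, b, c) (1, 0, 0)) a :=
  (hu _).hasFDerivAt.comp_hasDerivAt a (hasDerivAt_graph_fst b (hasDerivAt_const a c))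

theorem hasDerivAt_uncurry₃_snd (hu : Differentiable ℝ (uncurry₃ u)) (a b c : ℝ) :
    HasDerivAt (fun s => u a s c) (fderiv ℝ (uncurry₃ u) (a, b, c) (0, 1, 0)) b :=
  (hu _).hasFDerivAt.comp_hasDerivAt b (hasDerivAt_graph_snd a (hasDerivAt_const b c))

theorem hasDerivAt_uncurry₃_thd (hu : Differentiable ℝ (uncurry₃ u)) (a b c : ℝ) :
    HasDerivAt (fun s => u a b s) (fderiv ℝ (uncurry₃ u) (a, b, c) (0, 0, 1)) c :=
  (hu _).hasFDerivAt.comp_hasDerivAt c (hasDerivAt_line_thd a b c)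

theorem hasDerivAt_fderiv_uncurry₃_thd (hu : ContDiff ℝ 2 (uncurry₃ u)) (a b c : ℝ)
    (v : ℝ × ℝ × ℝ) :
    HasDerivAt (fun s => fderiv ℝ (uncurry₃ u) (a, b, s) v)
      (fderiv ℝ (fderiv ℝ (uncurry₃ u)) (a, b, c) (0, 0, 1) v) c :=
  (hasDerivAt_line_thd a b c).fderiv_apply v
    ((hu.fderiv_right le_rfl).differentiable one_ne_zero _)

theorem deriv_deriv_uncurry₃_thd (hu : ContDiff ℝ 2 (uncurry₃ u)) (a b c : ℝ) :
    deriv (fun y => deriv (fun y' => u a b y') y) c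
      = fderiv ℝ (fderiv ℝ (uncurry₃ u)) (a, b, c) (0, 0, 1) (0, 0, 1) := by
  simp only [fun y => (hasDerivAt_uncurry₃_thd (hu.differentiable (by norm_num)) a b y).deriv]
  exact (hasDerivAt_fderiv_uncurry₃_thd hu a b c _).deriv

variable {g : ℝ → ℝ → ℝ}

theorem fderiv_fderiv_uncurry₃_graph_fst (hu : ContDiff ℝ 2 (uncurry₃ u))
    (hg : Differentiable ℝ (uncurry g))
    (hcrit : ∀ a b, deriv (fun y => u a b y) (g a b) = 0) (t x : ℝ) :
    fderiv ℝ (fderiv ℝ (uncurry₃ u)) (t, x, g t x) (1, 0, deriv (fun t' => g t' x) t)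
      (0, 0, 1) = 0 := by
  have hg_t : DifferentiableAt ℝ (fun t' => g t' x) t :=
    (hg _).comp t (differentiableAt_id.prodMk (differentiableAt_const x))
  refine fderiv_fderiv_apply_eq_zero_of_eventually
    ((hu.fderiv_right le_rfl).differentiable one_ne_zero _)
    (hasDerivAt_graph_fst x hg_t.hasDerivAt) (Eventually.of_forall fun t' => ?_)
  rw [← (hasDerivAt_uncurry₃_thd (hu.differentiable (by norm_num)) _ _ _).deriv]
  exact hcrit t' x

theorem fderiv_fderiv_uncurry₃_graph_snd (hu : ContDiff ℝ 2 (uncurry₃ u))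
    (hg : Differentiable ℝ (uncurry g))
    (hcrit : ∀ a b, deriv (fun y => u a b y) (g a b) = 0) (t x : ℝ) :
    fderiv ℝ (fderiv ℝ (uncurry₃ u)) (t, x, g t x) (0, 1, deriv (fun x' => g t x') x)
      (0, 0, 1) = 0 := by
  have hg_x : DifferentiableAt ℝ (fun x' => g t x') x :=
    (hg _).comp x ((differentiableAt_const t).prodMk differentiableAt_id)
  refine fderiv_fderiv_apply_eq_zero_of_eventually
    ((hu.fderiv_right le_rfl).differentiable one_ne_zero _)
    (hasDerivAt_graph_snd t hg_x.hasDerivAt) (Eventually.of_forall fun x' => ?_)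
  rw [← (hasDerivAt_uncurry₃_thd (hu.differentiable (by norm_num)) _ _ _).deriv]
  exact hcrit t x'

end Trivariate

theorem hamiltonJacobi_deriv_eq_of_critical {F₁ F₂ F₃ m r : ℝ → ℝ} {F₁' F₂' F₃' c k α y₀ : ℝ}
    (h₁ : HasDerivAt F₁ F₁' y₀) (h₂ : HasDerivAt F₂ F₂' y₀) (h₃ : HasDerivAt F₃ F₃' y₀)
    (hm : DifferentiableAt ℝ m y₀) (hr : DifferentiableAt ℝ r y₀)
    (h₂₀ : F₂ y₀ = 0) (h₃₀ : F₃ y₀ = 0)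
    (hHJ : ∀ᶠ y in 𝓝 y₀, F₁ y + m y * c * F₂ y = α * (r y - k) + F₂ y ^ 2 + F₃ y ^ 2) :
    F₁' + m y₀ * c * F₂' = α * deriv r y₀ := by
  have hL := h₁.add ((hm.hasDerivAt.mul_const c).mul h₂)
  have hR := (((hr.hasDerivAt.sub_const k).const_mul α).add (h₂.pow 2)).add (h₃.pow 2)
  have := hL.unique (hR.congr_of_eventuallyEq hHJ)
  simp only [h₂₀, h₃₀] at this
  linear_combination this

theorem transport_eq_of_isSymm {B : ℝ × ℝ × ℝ →L[ℝ] ℝ × ℝ × ℝ →L[ℝ] ℝ}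
    (hB : ∀ v w, B v w = B w v) {gt gx c a : ℝ}
    (ht : B (1, 0, gt) (0, 0, 1) = 0) (hx : B (0, 1, gx) (0, 0, 1) = 0)
    (hy : B (0, 0, 1) (1, 0, 0) + c * B (0, 0, 1) (0, 1, 0) = a)
    (hneg : B (0, 0, 1) (0, 0, 1) < 0) :
    gt + c * gx = a / -B (0, 0, 1) (0, 0, 1) := by
  have split (a b c : ℝ) : ((a, b, c) : ℝ × ℝ × ℝ) = (a, b, 0) + c • (0, 0, 1) := by simp
  rw [split, map_add, map_smul] at ht hx
  simp only [add_apply, smul_apply, smul_eq_mul] at ht hx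
  rw [eq_div_iff (neg_pos.mpr hneg).ne']
  linear_combination hy - ht - c * hx + hB (1, 0, 0) (0, 0, 1) + c * hB (0, 1, 0) (0, 0, 1)

theorem transport_equation_for_fittest_phenotype_general
    (Y α ρmax : ℝ)
    (μ r : ℝ → ℝ) (hμ : ContDiff ℝ 1 μ) (hr : ContDiff ℝ 1 r)
    (E : ℝ → ℝ → ℝ)
    (ρ : ℝ → ℝ → ℝ)
    (u : ℝ → ℝ → ℝ → ℝ)
    (hu : ContDiff ℝ 2 (fun p : ℝ × ℝ × ℝ => u p.1 p.2.1 p.2.2))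
    (ybar : ℝ → ℝ → ℝ)
    (hybar : Differentiable ℝ (fun p : ℝ × ℝ => ybar p.1 p.2))
    (hrange : ∀ t x : ℝ, ybar t x ∈ Set.Ioo 0 Y)
    (hHJ : ∀ t x : ℝ, ∀ y ∈ Set.Ioo 0 Y,
      deriv (fun t' => u t' x y) t + μ y * deriv (E t) x * deriv (fun x' => u t x' y) x
        = α * (r y - ρ t x / ρmax)
          + (deriv (fun x' => u t x' y) x) ^ 2 + (deriv (fun y' => u t x y') y) ^ 2)
    (hfocy : ∀ t x : ℝ, deriv (fun y => u t x y) (ybar t x) = 0)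
    (hfocx : ∀ t x : ℝ, deriv (fun x' => u t x' (ybar t x)) x = 0)
    (hconc : ∀ t x : ℝ, deriv (fun y => deriv (fun y' => u t x y') y) (ybar t x) < 0) :
    ∀ t x : ℝ,
      deriv (fun t' => ybar t' x) t
        + μ (ybar t x) * deriv (E t) x * deriv (fun x' => ybar t x') x
      = α * deriv r (ybar t x)
          / (- deriv (fun y => deriv (fun y' => u t x y') y) (ybar t x)) := by
  intro t x
  set Du := fderiv ℝ (uncurry₃ u)
  have hu₁ : Differentiable ℝ (uncurry₃ u) := hu.differentiable (by norm_num)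
  have hHJ_near : ∀ᶠ y in 𝓝 (ybar t x),
      Du (t, x, y) (1, 0, 0) + μ y * deriv (E t) x * Du (t, x, y) (0, 1, 0)
        = α * (r y - ρ t x / ρmax) + Du (t, x, y) (0, 1, 0) ^ 2 + Du (t, x, y) (0, 0, 1) ^ 2 := by
    filter_upwards [isOpen_Ioo.mem_nhds (hrange t x)] with y hy
    simpa only [(hasDerivAt_uncurry₃_fst hu₁ t x y).deriv,
      (hasDerivAt_uncurry₃_snd hu₁ t x y).deriv, (hasDerivAt_uncurry₃_thd hu₁ t x y).deriv]
      using hHJ t x y hy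
  have hHJ_deriv := hamiltonJacobi_deriv_eq_of_critical
    (hasDerivAt_fderiv_uncurry₃_thd hu t x _ (1, 0, 0))
    (hasDerivAt_fderiv_uncurry₃_thd hu t x _ (0, 1, 0))
    (hasDerivAt_fderiv_uncurry₃_thd hu t x _ (0, 0, 1))
    (hμ.differentiable one_ne_zero _) (hr.differentiable one_ne_zero _)
    ((hasDerivAt_uncurry₃_snd hu₁ t x _).deriv ▸ hfocx t x)
    ((hasDerivAt_uncurry₃_thd hu₁ t x _).deriv ▸ hfocy t x) hHJ_near
  have hu_yy := deriv_deriv_uncurry₃_thd hu t x (ybar t x)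
  rw [hu_yy]
  exact transport_eq_of_isSymm (hu.contDiffAt.isSymmSndFDerivAt (by norm_num))
    (fderiv_fderiv_uncurry₃_graph_fst hu hybar hfocy t x)
    (fderiv_fderiv_uncurry₃_graph_snd hu hybar hfocy t x) hHJ_deriv (hu_yy ▸ hconc t x)

/-- transport equation for the dominant phenotype `ȳ(t,x)`. -/
theorem transport_equation_for_fittest_phenotype
    (Y α ρmax : ℝ) (hY : 0 < Y) (hα : 0 < α) (hρmax : 0 < ρmax)
    (μ r : ℝ → ℝ) (hμ : ContDiff ℝ 1 μ) (hr : ContDiff ℝ 1 r)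
    (E : ℝ → ℝ → ℝ) (hE : ∀ t x : ℝ, DifferentiableAt ℝ (E t) x)
    (ρ : ℝ → ℝ → ℝ)
    (u : ℝ → ℝ → ℝ → ℝ)
    (hu : ContDiff ℝ 2 (fun p : ℝ × ℝ × ℝ => u p.1 p.2.1 p.2.2))
    (ybar : ℝ → ℝ → ℝ)
    (hybar : Differentiable ℝ (fun p : ℝ × ℝ => ybar p.1 p.2))
    (hrange : ∀ t x : ℝ, ybar t x ∈ Set.Ioo 0 Y)
    (hHJ : ∀ t x : ℝ, ∀ y ∈ Set.Ioo 0 Y,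
      deriv (fun t' => u t' x y) t + μ y * deriv (E t) x * deriv (fun x' => u t x' y) x
        = α * (r y - ρ t x / ρmax)
          + (deriv (fun x' => u t x' y) x) ^ 2 + (deriv (fun y' => u t x y') y) ^ 2)
    (hfocy : ∀ t x : ℝ, deriv (fun y => u t x y) (ybar t x) = 0)
    (hfocx : ∀ t x : ℝ, deriv (fun x' => u t x' (ybar t x)) x = 0)
    (hconc : ∀ t x : ℝ, deriv (fun y => deriv (fun y' => u t x y') y) (ybar t x) < 0) :
    ∀ t x : ℝ,
      deriv (fun t' => ybar t' x) t
        + μ (ybar t x) * deriv (E t) x * deriv (fun x' => ybar t x') x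
      = α * deriv r (ybar t x)
          / (- deriv (fun y => deriv (fun y' => u t x y') y) (ybar t x)) :=
  transport_equation_for_fittest_phenotype_general Y α ρmax μ r hμ hr E ρ u hu ybar hybar hrange hHJ
    hfocy hfocx hconc
end
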